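/- Let β > 0, k ≥ 0, and μ ∈ ℂ \ {0} with Re μ ≥ 0. Then the four roots of the quartic polynomial r⁴ - 2k²r² + k⁴ + μ/β = 0 are given by r = ±√(k² ± i√μ/√β), they are pairwise distinct, exactly two of them have strictly positive real part, and no root is purely imaginary. -/
import Mathlib
lemma sq_half (z : ℂ) : (z ^ (1/2:ℂ)) ^ 2 = z := by
  have : (1/2 : ℂ) = ((2:ℕ) : ℂ)⁻¹ := by norm_num
  rw [this, Complex.cpow_nat_inv_pow _ (by norm_num)]

lemma re_half_pos {z : ℂ} (hz : z ≠ 0) (h : Complex.arg z ≠ Real.pi) :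
    0 < (z ^ (1/2:ℂ)).re := by
  rw [Complex.cpow_def_of_ne_zero hz, Complex.exp_re]
  apply mul_pos (Real.exp_pos _)
  apply Real.cos_pos_of_mem_Ioo
  have h1 := Complex.neg_pi_lt_arg z
  have h2 := (Complex.arg_le_pi z).lt_of_ne h
  have him : (Complex.log z * (1/2)).im = z.arg / 2 := by
    simp [Complex.mul_im, Complex.log_im]; ring
  rw [him]
  constructor <;> linarith

lemma re_half_pos_of_im {z : ℂ} (h : z.im ≠ 0) : 0 < (z ^ (1/2:ℂ)).re := by
  apply re_half_pos
  · intro h0; rw [h0] at h; simp at h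
  · intro ha
    exact h ((Complex.arg_eq_pi_iff.mp ha).2)

lemma re_half_pos_of_re {z : ℂ} (hz : z ≠ 0) (h : 0 ≤ z.re) : 0 < (z ^ (1/2:ℂ)).re := by
  apply re_half_pos hz
  intro ha
  have := (Complex.arg_eq_pi_iff.mp ha).1
  linarith

/-- roots of r⁴ - 2k²r² + k⁴ + μ/β = 0 for Re μ ≥ 0, μ ≠ 0. -/
theorem stmt_1 (β k : ℝ) (hβ : 0 < β) (hk : 0 ≤ k)
    (μ : ℂ) (hμ : μ ≠ 0) (hre : 0 ≤ μ.re)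
    (r₁ r₂ : ℂ)
    (hr₁ : r₁ = ((k : ℂ) ^ 2 + Complex.I * μ ^ (1/2 : ℂ) / (Real.sqrt β : ℂ)) ^ (1/2 : ℂ))
    (hr₂ : r₂ = ((k : ℂ) ^ 2 - Complex.I * μ ^ (1/2 : ℂ) / (Real.sqrt β : ℂ)) ^ (1/2 : ℂ)) :
    (∀ r : ℂ, r ^ 4 - 2 * (k : ℂ) ^ 2 * r ^ 2 + (k : ℂ) ^ 4 + μ / (β : ℂ) = 0 ↔
        r = r₁ ∨ r = -r₁ ∨ r = r₂ ∨ r = -r₂) ∧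
    ([r₁, -r₁, r₂, -r₂].Pairwise (· ≠ ·)) ∧
    (0 < r₁.re ∧ 0 < r₂.re ∧ (-r₁).re < 0 ∧ (-r₂).re < 0) ∧
    (∀ r ∈ ({r₁, -r₁, r₂, -r₂} : Set ℂ), r.re ≠ 0) := by
  set s : ℂ := μ ^ (1/2 : ℂ) with hs_def
  have hsβ : 0 < Real.sqrt β := Real.sqrt_pos.mpr hβ
  have hc0 : ((Real.sqrt β : ℝ) : ℂ) ≠ 0 := by
    exact_mod_cast hsβ.ne'
  have hc2 : ((Real.sqrt β : ℝ) : ℂ) ^ 2 = (β : ℂ) := by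
    rw [← Complex.ofReal_pow, Real.sq_sqrt hβ.le]
  have hs2 : s ^ 2 = μ := sq_half μ
  have hsre : 0 < s.re := re_half_pos_of_re hμ hre
  set D : ℂ := Complex.I * s / (Real.sqrt β : ℂ) with hD_def
  have hDim : D.im = s.re / Real.sqrt β := by
    rw [hD_def, Complex.div_ofReal_im]
    simp
  have hDim_pos : 0 < D.im := by rw [hDim]; positivity
  have hD2 : D ^ 2 = -(μ / (β : ℂ)) := by
    rw [hD_def, div_pow, mul_pow, Complex.I_sq, hs2, hc2]
    ring
  clear_value D
  have hkim : ((k:ℂ)^2).im = 0 := by simp [pow_two, Complex.mul_im]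
  have h1 : r₁ ^ 2 = (k:ℂ)^2 + D := by rw [hr₁]; exact sq_half _
  have h2 : r₂ ^ 2 = (k:ℂ)^2 - D := by rw [hr₂]; exact sq_half _
  have hre1 : 0 < r₁.re := by
    rw [hr₁]
    apply re_half_pos_of_im
    have : ((k:ℂ)^2 + D).im = D.im := by rw [Complex.add_im, hkim, zero_add]
    rw [this]; exact hDim_pos.ne'
  have hre2 : 0 < r₂.re := by
    rw [hr₂]
    apply re_half_pos_of_im
    have : ((k:ℂ)^2 - D).im = -D.im := by rw [Complex.sub_im, hkim, zero_sub]
    rw [this]; simpa using hDim_pos.ne'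
  have hsqne : r₁ ^ 2 ≠ r₂ ^ 2 := by
    rw [h1, h2]
    intro h
    have := congrArg Complex.im h
    simp at this
    linarith
  have key : ∀ r : ℂ, r ^ 4 - 2 * (k : ℂ) ^ 2 * r ^ 2 + (k : ℂ) ^ 4 + μ / (β : ℂ)
      = (r - r₁) * (r + r₁) * ((r - r₂) * (r + r₂)) := by
    intro r
    have : (r - r₁) * (r + r₁) * ((r - r₂) * (r + r₂)) = (r^2 - r₁^2) * (r^2 - r₂^2) := by ring
    rw [this, h1, h2]
    linear_combination hD2
  refine ⟨?_, ?_, ⟨hre1, hre2, by simpa using hre1, by simpa using hre2⟩, ?_⟩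
  · intro r
    rw [key r, mul_eq_zero, mul_eq_zero, mul_eq_zero, sub_eq_zero, sub_eq_zero,
      add_eq_zero_iff_eq_neg, add_eq_zero_iff_eq_neg]
    tauto
  · have hne12 : r₁ ≠ r₂ := fun h => hsqne (by rw [h])
    have hne12' : r₁ ≠ -r₂ := fun h => hsqne (by rw [h]; ring)
    have hne12'' : -r₁ ≠ r₂ := fun h => hsqne (by rw [← h]; ring)
    have hne12''' : -r₁ ≠ -r₂ := fun h => hsqne (by rw [neg_inj.mp h])
    have h11 : r₁ ≠ -r₁ := fun h => by
      have := congrArg Complex.re h; simp at this; linarith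
    have h22 : r₂ ≠ -r₂ := fun h => by
      have := congrArg Complex.re h; simp at this; linarith
    simp [List.pairwise_cons]
    refine ⟨⟨h11, hne12, hne12'⟩, ⟨?_, ?_⟩, ?_⟩ <;> tauto
  · intro r hr
    simp only [Set.mem_insert_iff, Set.mem_singleton_iff] at hr
    rcases hr with h | h | h | h <;> subst h <;> simp <;> linarith
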